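/- Let S = ⟨n₁, …, n_k⟩ be a numerical monoid with minimal generators n₁ < n₂ < ⋯ < n_k. Then the elasticity of S equals n_k/n₁; that is, sup{L(x)/ℓ(x) : x ∈ S, x ≠ 0} = n_k/n₁ as a real number. -/
import Mathlib


/-- The numerical monoid generated by `n 0, …, n (k-1)`. -/
def NumMon {k : ℕ} (n : Fin k → ℕ) : Set ℕ := {x | ∃ c : Fin k → ℕ, ∑ i, c i * n i = x}

/-- The generating set is minimal: no generator lies in the submonoid
generated by the remaining generators. -/
def MinimalGens {k : ℕ} (n : Fin k → ℕ) : Prop :=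
  ∀ i, ¬ ∃ c : Fin k → ℕ, c i = 0 ∧ ∑ j, c j * n j = n i

/-- The set of factorization lengths of `x`. -/
def GLenSet {k : ℕ} (n : Fin k → ℕ) (x : ℕ) : Set ℕ :=
  {l | ∃ c : Fin k → ℕ, ∑ i, c i * n i = x ∧ ∑ i, c i = l}

/-- Maximum factorization length. -/
noncomputable def GLmax {k : ℕ} (n : Fin k → ℕ) (x : ℕ) : ℕ := sSup (GLenSet n x)

/-- Minimum factorization length. -/
noncomputable def GLmin {k : ℕ} (n : Fin k → ℕ) (x : ℕ) : ℕ := sInf (GLenSet n x)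

lemma fact_lower {k : ℕ} (n : Fin k → ℕ) (a : ℕ) (ha : ∀ i, a ≤ n i) (c : Fin k → ℕ) :
    (∑ i, c i) * a ≤ ∑ i, c i * n i := by
  rw [Finset.sum_mul]
  exact Finset.sum_le_sum fun i _ => Nat.mul_le_mul_left _ (ha i)

lemma fact_upper {k : ℕ} (n : Fin k → ℕ) (b : ℕ) (hb : ∀ i, n i ≤ b) (c : Fin k → ℕ) :
    ∑ i, c i * n i ≤ (∑ i, c i) * b := by
  rw [Finset.sum_mul]
  exact Finset.sum_le_sum fun i _ => Nat.mul_le_mul_left _ (hb i)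

lemma single_sum {k : ℕ} (n : Fin k → ℕ) (i0 : Fin k) (m : ℕ) :
    ∑ j, (if j = i0 then m else 0) * n j = m * n i0 := by
  rw [Finset.sum_eq_single i0]
  · simp
  · intro j _ hj; simp [hj]
  · simp

theorem numerical_monoid_elasticity {k : ℕ} (hk : 0 < k)
    (n : Fin k → ℕ) (hpos : ∀ i, 0 < n i) (hmono : StrictMono n)
    (hmin : MinimalGens n) :
    sSup {r : ℝ | ∃ x ∈ NumMon n, x ≠ 0 ∧ r = (GLmax n x : ℝ) / (GLmin n x : ℝ)} =
      (n ⟨k - 1, by omega⟩ : ℝ) / (n ⟨0, hk⟩ : ℝ) := by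
  set i0 : Fin k := ⟨0, hk⟩
  set ik : Fin k := ⟨k - 1, by omega⟩
  set a := n i0 with ha_def
  set b := n ik with hb_def
  have ha : ∀ i, a ≤ n i := fun i => hmono.monotone (by simp [i0, Fin.le_def])
  have hb : ∀ i, n i ≤ b := fun i => hmono.monotone (by simp [ik, Fin.le_def]; omega)
  have hapos : 0 < a := hpos i0
  have hbpos : 0 < b := hpos ik
  -- general facts about lengths for x in the monoid
  have key : ∀ x ∈ NumMon n, x ≠ 0 →
      GLmax n x ∈ GLenSet n x ∧ GLmin n x ∈ GLenSet n x ∧ 0 < GLmin n x := by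
    intro x hx hx0
    obtain ⟨c, hc⟩ := hx
    have hne : (GLenSet n x).Nonempty := ⟨∑ i, c i, c, hc, rfl⟩
    have hbdd : BddAbove (GLenSet n x) := by
      refine ⟨x, fun l hl => ?_⟩
      obtain ⟨d, hd, hdl⟩ := hl
      calc l = l * 1 := (Nat.mul_one l).symm
        _ ≤ l * a := Nat.mul_le_mul_left _ hapos
        _ = (∑ i, d i) * a := by rw [hdl]
        _ ≤ ∑ i, d i * n i := fact_lower n a ha d
        _ = x := hd
    have hmax : GLmax n x ∈ GLenSet n x := Nat.sSup_mem hne hbdd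
    have hmin' : GLmin n x ∈ GLenSet n x := Nat.sInf_mem hne
    refine ⟨hmax, hmin', ?_⟩
    rcases Nat.eq_zero_or_pos (GLmin n x) with h | h
    swap
    · exact h
    · exfalso
      obtain ⟨d, hd, hdl⟩ := hmin'
      rw [h] at hdl
      have : ∀ i ∈ Finset.univ, d i = 0 := fun i _ =>
        (Finset.sum_eq_zero_iff.mp hdl) i (Finset.mem_univ i)
      apply hx0
      rw [← hd]
      exact Finset.sum_eq_zero fun i hi => by rw [this i hi, Nat.zero_mul]
  -- upper bound
  have hub : ∀ r ∈ {r : ℝ | ∃ x ∈ NumMon n, x ≠ 0 ∧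
      r = (GLmax n x : ℝ) / (GLmin n x : ℝ)}, r ≤ (b : ℝ) / (a : ℝ) := by
    rintro r ⟨x, hx, hx0, rfl⟩
    obtain ⟨hmax, hmin', hminpos⟩ := key x hx hx0
    obtain ⟨cM, hcM, hcMl⟩ := hmax
    obtain ⟨cm, hcm, hcml⟩ := hmin'
    have h1 : GLmax n x * a ≤ x := by
      rw [← hcMl, ← hcM]; exact fact_lower n a ha cM
    have h2 : x ≤ GLmin n x * b := by
      rw [← hcml, ← hcm]; exact fact_upper n b hb cm
    have h3 : GLmax n x * a ≤ GLmin n x * b := le_trans h1 h2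
    rw [div_le_div_iff₀ (by exact_mod_cast hminpos) (by exact_mod_cast hapos), mul_comm (b:ℝ)]
    exact_mod_cast h3
  -- the value b/a is attained at x = a * b
  have hmem : (b : ℝ) / (a : ℝ) ∈ {r : ℝ | ∃ x ∈ NumMon n, x ≠ 0 ∧
      r = (GLmax n x : ℝ) / (GLmin n x : ℝ)} := by
    refine ⟨a * b, ⟨fun j => if j = i0 then b else 0, ?_⟩, ?_, ?_⟩
    · rw [single_sum]; ring
    · positivity
    · have hx : (a * b) ∈ NumMon n := ⟨fun j => if j = i0 then b else 0, by
        rw [single_sum]; ring⟩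
      obtain ⟨hmax, hmin', hminpos⟩ := key (a * b) hx (by positivity)
      have hne : (GLenSet n (a * b)).Nonempty := ⟨_, hmax⟩
      have hbdd : BddAbove (GLenSet n (a * b)) := by
        refine ⟨a * b, fun l hl => ?_⟩
        obtain ⟨d, hd, hdl⟩ := hl
        calc l = l * 1 := (Nat.mul_one l).symm
          _ ≤ l * a := Nat.mul_le_mul_left _ hapos
          _ = (∑ i, d i) * a := by rw [hdl]
          _ ≤ ∑ i, d i * n i := fact_lower n a ha d
          _ = a * b := hd
      -- GLmax = b
      have hb_mem : b ∈ GLenSet n (a * b) :=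
        ⟨fun j => if j = i0 then b else 0, by rw [single_sum]; ring, by
          simp [Finset.sum_ite_eq']⟩
      have ha_mem : a ∈ GLenSet n (a * b) :=
        ⟨fun j => if j = ik then a else 0, by rw [single_sum], by
          simp [Finset.sum_ite_eq']⟩
      have hmax_ge : b ≤ GLmax n (a * b) := le_csSup hbdd hb_mem
      have hmax_le : GLmax n (a * b) ≤ b := by
        obtain ⟨cM, hcM, hcMl⟩ := hmax
        have h1 : GLmax n (a * b) * a ≤ a * b := by
          rw [← hcMl, ← hcM]; exact fact_lower n a ha cM
        exact Nat.le_of_mul_le_mul_right (h1.trans_eq (Nat.mul_comm a b)) hapos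
      have hmin_le : GLmin n (a * b) ≤ a := Nat.sInf_le ha_mem
      have hmin_ge : a ≤ GLmin n (a * b) := by
        obtain ⟨cm, hcm, hcml⟩ := hmin'
        have h2 : a * b ≤ GLmin n (a * b) * b := by
          rw [← hcml, ← hcm]; exact fact_upper n b hb cm
        exact Nat.le_of_mul_le_mul_right h2 hbpos
      rw [le_antisymm hmax_le hmax_ge, le_antisymm hmin_le hmin_ge]
  exact le_antisymm (csSup_le ⟨_, hmem⟩ hub) (le_csSup ⟨_, hub⟩ hmem)
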